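/- Let H be a σ-MAG, let Z ⊆ V, and let π = (v0, …, vn) be a path of minimal length among all paths between v0 and vn in H that are m-open given Z. If v_j (0 < j < n) is a covered node on π (i.e., v_{j-1} and v_{j+1} are adjacent in H), then: (1) if the edge between v_{j-1} and v_{j+1} is v_{j-1} → v_{j+1}, there exists a unique index i < j such that the subpath of π between v_i and v_{j+1} is a discriminating path for v_j; (2) if the edge is v_{j-1} ← v_{j+1}, there exists a unique index i > j such that the subpath of π between v_{j-1} and v_i is a discriminating path for v_j. -/

import Mathlib

/-- An edge mark: tail or arrowhead. -/
inductive Mark : Type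
  | tail : Mark
  | arrow : Mark
  deriving DecidableEq

/-- A mixed graph, with directed edges (`dir a b` means `a → b`), bidirected edges and
undirected edges. -/
structure MixedGraph (V : Type*) where
  dir : V → V → Prop
  bidir : V → V → Prop
  undir : V → V → Prop
  bidir_symm : ∀ a b, bidir a b → bidir b a
  undir_symm : ∀ a b, undir a b → undir b a

variable {V : Type*}

/-- There is an edge between `x` and `y` carrying mark `m₁` at `x` and mark `m₂` at `y`. -/
def MixedGraph.EdgeMk (G : MixedGraph V) (x y : V) : Mark → Mark → Prop
  | Mark.tail, Mark.arrow => G.dir x y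
  | Mark.arrow, Mark.tail => G.dir y x
  | Mark.arrow, Mark.arrow => G.bidir x y
  | Mark.tail, Mark.tail => G.undir x y

theorem MixedGraph.edgeMk_symm {G : MixedGraph V} {x y : V} {m₁ m₂ : Mark}
    (h : G.EdgeMk x y m₁ m₂) : G.EdgeMk y x m₂ m₁ := by
  cases m₁ <;> cases m₂ <;>
    first
      | exact h
      | exact G.bidir_symm _ _ h
      | exact G.undir_symm _ _ h

/-- `x` and `y` are adjacent: some edge joins them. -/
def MixedGraph.Adj (G : MixedGraph V) (x y : V) : Prop :=
  G.dir x y ∨ G.dir y x ∨ G.bidir x y ∨ G.undir x y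

/-- There is an edge between `a` and `b` with an arrowhead at `a` (i.e. `a ←∗ b`). -/
def MixedGraph.ArrowAt (G : MixedGraph V) (a b : V) : Prop :=
  G.dir b a ∨ G.bidir a b

/-- There is an edge between `a` and `b` with a tail at `a` (i.e. `a —∗ b`). -/
def MixedGraph.TailAt (G : MixedGraph V) (a b : V) : Prop :=
  G.dir a b ∨ G.undir a b

/-- A walk of length `n`: vertices `vert 0, …, vert n`; the `i`-th edge joins `vert i`
and `vert (i+1)`, carrying mark `mk1 i` at `vert i` and mark `mk2 i` at `vert (i+1)`. -/
structure MixedGraph.Walk (G : MixedGraph V) (n : ℕ) where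
  vert : ℕ → V
  mk1 : ℕ → Mark
  mk2 : ℕ → Mark
  valid : ∀ i < n, G.EdgeMk (vert i) (vert (i + 1)) (mk1 i) (mk2 i)

/-- A walk is a path if its vertices are pairwise distinct. -/
def MixedGraph.Walk.IsPath {G : MixedGraph V} {n : ℕ} (w : G.Walk n) : Prop :=
  ∀ i j, i ≤ n → j ≤ n → w.vert i = w.vert j → i = j

/-- Position `k` is a collider on the walk: both incident edges have an arrowhead
at `vert k`. -/
def MixedGraph.Walk.IsCollider {G : MixedGraph V} {n : ℕ} (w : G.Walk n) (k : ℕ) : Prop :=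
  0 < k ∧ k < n ∧ w.mk2 (k - 1) = Mark.arrow ∧ w.mk1 k = Mark.arrow

/-- `a` is an ancestor of `b`: there is a directed walk from `a` to `b`. -/
def MixedGraph.Anc (G : MixedGraph V) (a b : V) : Prop :=
  Relation.ReflTransGen G.dir a b

/-- `a` is an ancestor of some element of `A`. -/
def MixedGraph.AncS (G : MixedGraph V) (a : V) (A : Set V) : Prop :=
  ∃ b ∈ A, G.Anc a b

/-- `b` lies in the strongly connected component of `a`. -/
def MixedGraph.Sc (G : MixedGraph V) (a b : V) : Prop :=
  G.Anc a b ∧ G.Anc b a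

/-- There is an anterior path from `a` to `b`: a path all of whose edges have a tail
mark at the endpoint nearer `a`. -/
def MixedGraph.AnteriorPath (G : MixedGraph V) (a b : V) : Prop :=
  ∃ (n : ℕ) (w : G.Walk n), w.IsPath ∧ w.vert 0 = a ∧ w.vert n = b ∧
    ∀ i < n, w.mk1 i = Mark.tail

/-- The walk is inducing: every non-endpoint node is a collider that is an ancestor
of one of the endpoints. -/
def MixedGraph.Walk.IsInducing {G : MixedGraph V} {n : ℕ} (w : G.Walk n) : Prop :=
  ∀ k, 0 < k → k < n →
    w.IsCollider k ∧ (G.Anc (w.vert k) (w.vert 0) ∨ G.Anc (w.vert k) (w.vert n))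

/-- There is an inducing path between `a` and `b`. -/
def MixedGraph.InducingPath (G : MixedGraph V) (a b : V) : Prop :=
  ∃ (n : ℕ) (w : G.Walk n), w.IsPath ∧ w.vert 0 = a ∧ w.vert n = b ∧ w.IsInducing

/-- There is an inducing walk between `a` and `b`. -/
def MixedGraph.InducingWalk (G : MixedGraph V) (a b : V) : Prop :=
  ∃ (n : ℕ) (w : G.Walk n), w.vert 0 = a ∧ w.vert n = b ∧ w.IsInducing

/-- The neighborhood of `a` (its undirected-edge neighbors) is complete. -/
def MixedGraph.CompleteNbh (G : MixedGraph V) (a : V) : Prop :=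
  ∀ b c, G.undir a b → G.undir a c → b ≠ c → G.undir b c

/-- A σ-maximal ancestral graph (σ-MAG). -/
structure MixedGraph.IsSigmaMAG (G : MixedGraph V) : Prop where
  /-- no self-loops -/
  no_self : ∀ a : V, ¬ G.dir a a ∧ ¬ G.bidir a a ∧ ¬ G.undir a a
  /-- at most one edge between any two nodes -/
  at_most_one : ∀ a b : V,
    (G.dir a b → ¬ G.dir b a ∧ ¬ G.bidir a b ∧ ¬ G.undir a b) ∧
    (G.bidir a b → ¬ G.undir a b)
  /-- ancestral: an anterior path from `a` to `b` excludes an edge into `a` -/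
  ancestral : ∀ a b : V, G.AnteriorPath a b → ¬ G.ArrowAt a b
  /-- maximal: no inducing path between non-adjacent nodes -/
  maximal : ∀ a b : V, a ≠ b → ¬ G.Adj a b → ¬ G.InducingPath a b
  /-- σ-complete, part 1: `a ∗→ b — c` forces `a, c` adjacent -/
  sigma_complete₁ : ∀ a b c : V, G.ArrowAt b a → G.undir b c → G.Adj a c
  /-- σ-complete, part 2: `a ∗→ b — c` and `b — d` force `c, d` adjacent -/
  sigma_complete₂ : ∀ a b c d : V, G.ArrowAt b a → G.undir b c → G.undir b d →
    c ≠ d → G.Adj c d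

/-- The walk is m-open given `Z`. -/
def MixedGraph.Walk.MOpen {G : MixedGraph V} {n : ℕ} (w : G.Walk n) (Z : Set V) : Prop :=
  (∀ k ≤ n, ¬ w.IsCollider k → w.vert k ∉ Z) ∧
  (∀ k, w.IsCollider k → G.AncS (w.vert k) Z) ∧
  (∀ k, 0 < k → k < n →
    ¬ (w.mk2 (k - 1) = Mark.arrow ∧ w.mk1 k = Mark.tail ∧ w.mk2 k = Mark.tail) ∧
    ¬ (w.mk1 (k - 1) = Mark.tail ∧ w.mk2 (k - 1) = Mark.tail ∧ w.mk1 k = Mark.arrow))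

/-- `X` is m-separated from `Y` given `Z`: every walk from `X` to `Y` is m-blocked. -/
def MixedGraph.MSep (G : MixedGraph V) (X Y Z : Set V) : Prop :=
  ∀ (n : ℕ) (w : G.Walk n), w.vert 0 ∈ X → w.vert n ∈ Y → ¬ w.MOpen Z

/-- A directed mixed graph (DMG): no undirected edges and no self-loops. -/
def MixedGraph.IsDMG (G : MixedGraph V) : Prop :=
  (∀ a b : V, ¬ G.undir a b) ∧ ∀ a : V, ¬ G.dir a a ∧ ¬ G.bidir a a

/-- Position `k` is an unblockable non-collider on the walk (in a DMG). -/
def MixedGraph.Walk.Unblockable {G : MixedGraph V} {n : ℕ} (w : G.Walk n) (k : ℕ) : Prop :=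
  0 < k ∧ k < n ∧
  ((w.mk1 (k - 1) = Mark.arrow ∧ w.mk2 (k - 1) = Mark.tail ∧ w.mk1 k = Mark.arrow ∧
      G.Sc (w.vert k) (w.vert (k - 1))) ∨
   (w.mk2 (k - 1) = Mark.arrow ∧ w.mk1 k = Mark.tail ∧ w.mk2 k = Mark.arrow ∧
      G.Sc (w.vert k) (w.vert (k + 1))) ∨
   (w.mk1 (k - 1) = Mark.arrow ∧ w.mk2 (k - 1) = Mark.tail ∧
      w.mk1 k = Mark.tail ∧ w.mk2 k = Mark.arrow ∧
      G.Sc (w.vert k) (w.vert (k - 1)) ∧ G.Sc (w.vert k) (w.vert (k + 1))))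

/-- The walk is σ-open given `W`. -/
def MixedGraph.Walk.SigmaOpen {G : MixedGraph V} {n : ℕ} (w : G.Walk n) (W : Set V) : Prop :=
  (∀ k, w.IsCollider k → G.AncS (w.vert k) W) ∧
  (∀ k ≤ n, ¬ w.IsCollider k → ¬ w.Unblockable k → w.vert k ∉ W)

/-- `X` is σ-separated from `Y` given `W`: every walk from `X` to `Y` is σ-blocked. -/
def MixedGraph.SigmaSep (G : MixedGraph V) (X Y W : Set V) : Prop :=
  ∀ (n : ℕ) (w : G.Walk n), w.vert 0 ∈ X → w.vert n ∈ Y → ¬ w.SigmaOpen W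

/-- The walk is σ-inducing given `S`: each collider is an ancestor of the endpoints or
of `S`, and each non-endpoint non-collider is unblockable. -/
def MixedGraph.Walk.IsSigmaInducing {G : MixedGraph V} {n : ℕ} (w : G.Walk n) (S : Set V) :
    Prop :=
  (∀ k, w.IsCollider k → G.AncS (w.vert k) ({w.vert 0, w.vert n} ∪ S)) ∧
  (∀ k, 0 < k → k < n → ¬ w.IsCollider k → w.Unblockable k)

/-- There is a σ-inducing path given `S` between `a` and `b`. -/
def MixedGraph.SigmaInducingPath (G : MixedGraph V) (S : Set V) (a b : V) : Prop :=
  ∃ (n : ℕ) (w : G.Walk n), w.IsPath ∧ w.vert 0 = a ∧ w.vert n = b ∧ w.IsSigmaInducing S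

/-- The mixed graph `H` (on node set `V`) represents the graph `G` (on node set
`V⁺ = V ∪ S`, where `V` is embedded via `ι` and `S = (Set.range ι)ᶜ` is the set of
selection nodes) given `S`. -/
def Represents {V W : Type*} (H : MixedGraph V) (G : MixedGraph W) (ι : V → W) : Prop :=
  Function.Injective ι ∧
  (∀ a : V, ¬ H.dir a a ∧ ¬ H.bidir a a ∧ ¬ H.undir a a) ∧
  (∀ a b : V,
    (H.dir a b → ¬ H.dir b a ∧ ¬ H.bidir a b ∧ ¬ H.undir a b) ∧
    (H.bidir a b → ¬ H.undir a b)) ∧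
  (∀ a b : V, a ≠ b → (H.Adj a b ↔ G.SigmaInducingPath (Set.range ι)ᶜ (ι a) (ι b))) ∧
  (∀ a b : V, H.ArrowAt a b → ¬ G.AncS (ι a) ({ι b} ∪ (Set.range ι)ᶜ)) ∧
  (∀ a b : V, H.TailAt a b → G.AncS (ι a) ({ι b} ∪ (Set.range ι)ᶜ))

/-- The walk (of length `n ≥ 3`) is a discriminating path for its second-to-last node
`vert (n-1)`: the endpoints are non-adjacent, and every node strictly between `vert 0`
and `vert (n-1)` is a collider and a parent of `vert n`. -/
def MixedGraph.Walk.IsDiscriminating {G : MixedGraph V} {n : ℕ} (w : G.Walk n) : Prop :=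
  3 ≤ n ∧ w.IsPath ∧ ¬ G.Adj (w.vert 0) (w.vert n) ∧
  ∀ k, 0 < k → k < n - 1 → w.IsCollider k ∧ G.dir (w.vert k) (w.vert n)

/-- The subwalk starting at position `i`, of length `m`. -/
def MixedGraph.Walk.shift {G : MixedGraph V} {n : ℕ} (w : G.Walk n) (i m : ℕ)
    (h : i + m ≤ n) : G.Walk m where
  vert k := w.vert (i + k)
  mk1 k := w.mk1 (i + k)
  mk2 k := w.mk2 (i + k)
  valid k hk := by
    have hv := w.valid (i + k) (by omega)
    have he : i + (k + 1) = i + k + 1 := by omega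
    show G.EdgeMk (w.vert (i + k)) (w.vert (i + (k + 1))) (w.mk1 (i + k)) (w.mk2 (i + k))
    rw [he]
    exact hv

/-- The reversed walk. -/
def MixedGraph.Walk.reverse {G : MixedGraph V} {n : ℕ} (w : G.Walk n) : G.Walk n where
  vert k := w.vert (n - k)
  mk1 k := w.mk2 (n - 1 - k)
  mk2 k := w.mk1 (n - 1 - k)
  valid i hi := by
    have hv := w.valid (n - 1 - i) (by omega)
    have h1 : n - 1 - i + 1 = n - i := by omega
    have h2 : n - (i + 1) = n - 1 - i := by omega
    rw [h1] at hv
    show G.EdgeMk (w.vert (n - i)) (w.vert (n - (i + 1))) (w.mk2 (n - 1 - i)) (w.mk1 (n - 1 - i))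
    rw [h2]
    exact MixedGraph.edgeMk_symm hv

/-- `(a, b, c)` is an unshielded collider in `G`. -/
def MixedGraph.UnshieldedCollider (G : MixedGraph V) (a b c : V) : Prop :=
  a ≠ c ∧ ¬ G.Adj a c ∧ G.ArrowAt b a ∧ G.ArrowAt b c

/-- Condition 1 for two σ-MAGs on the same node set: same adjacencies, same unshielded
colliders, and agreement of the collider status of the discriminated node on
corresponding discriminating paths. -/
def Condition1 {V : Type*} (H₁ H₂ : MixedGraph V) : Prop :=
  (∀ a b, H₁.Adj a b ↔ H₂.Adj a b) ∧
  (∀ a b c, H₁.UnshieldedCollider a b c ↔ H₂.UnshieldedCollider a b c) ∧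
  (∀ (n : ℕ) (w₁ : H₁.Walk n) (w₂ : H₂.Walk n),
    (∀ k, w₂.vert k = w₁.vert k) →
    w₁.IsDiscriminating → w₂.IsDiscriminating →
    (w₁.IsCollider (n - 1) ↔ w₂.IsCollider (n - 1)))

/-- `H₁` and `H₂` are m-Markov equivalent. -/
def MMarkovEquiv {V : Type*} (H₁ H₂ : MixedGraph V) : Prop :=
  ∀ X Y Z : Set V, H₁.MSep X Y Z ↔ H₂.MSep X Y Z

/-!
Take `v_{j-1} → v_{j+1}`; the other case is this one for the reversed path. Walking left from
`v_j`, each node `v_i` adjacent to `v_{j+1}` is a collider with `v_i → v_{j+1}`: ancestrality rules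
out most other edges, and each remaining one would be a chord turning the stretch from `v_i` to
`v_{j+1}` into a single edge while keeping the path m-open (σ-completeness first slides the
chord's endpoint past undirected edges `v_{j+1} — v_{j+2} — ⋯`). So the first node not adjacent to
`v_{j+1}` starts a discriminating path for `v_j`, and no other node does, since every node after
it is a parent of `v_{j+1}`.
-/

namespace MixedGraph

variable {G : MixedGraph V} {Z : Set V} {n : ℕ}

lemma arrowAt_of_edgeMk {x y : V} {m : Mark} (h : G.EdgeMk x y .arrow m) : G.ArrowAt x y := by
  cases m
  · exact Or.inl h
  · exact Or.inr h

lemma adj_iff_exists_edgeMk {x y : V} : G.Adj x y ↔ ∃ m₁ m₂, G.EdgeMk x y m₁ m₂ := by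
  constructor
  · rintro (h | h | h | h)
    exacts [⟨.tail, .arrow, h⟩, ⟨.arrow, .tail, h⟩, ⟨.arrow, .arrow, h⟩, ⟨.tail, .tail, h⟩]
  · rintro ⟨_ | _, _ | _, h⟩
    exacts [Or.inr (Or.inr (Or.inr h)), Or.inl h, Or.inr (Or.inl h), Or.inr (Or.inr (Or.inl h))]

lemma IsSigmaMAG.ne_of_edgeMk (hG : G.IsSigmaMAG) {x y : V} {m₁ m₂ : Mark}
    (h : G.EdgeMk x y m₁ m₂) : x ≠ y := by
  rintro rfl
  have := hG.no_self x
  cases m₁ <;> cases m₂ <;> tauto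

def walk₂ {a b c : V} {m₁ m₂ m₃ m₄ : Mark} (h₁ : G.EdgeMk a b m₁ m₂) (h₂ : G.EdgeMk b c m₃ m₄) :
    G.Walk 2 where
  vert k := match k with | 0 => a | 1 => b | _ => c
  mk1 k := match k with | 0 => m₁ | _ => m₃
  mk2 k := match k with | 0 => m₂ | _ => m₄
  valid i hi := by
    interval_cases i
    exacts [h₁, h₂]

lemma IsSigmaMAG.not_arrowAt_of_tails (hG : G.IsSigmaMAG) {a b c : V} {m m' : Mark}
    (h₁ : G.EdgeMk a b .tail m) (h₂ : G.EdgeMk b c .tail m') : ¬ G.ArrowAt a c := by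
  intro h
  have hac : a ≠ c := by
    rcases h with h | h
    exacts [(hG.ne_of_edgeMk (show G.EdgeMk c a .tail .arrow from h)).symm,
      hG.ne_of_edgeMk (show G.EdgeMk a c .arrow .arrow from h)]
  refine hG.ancestral a c ⟨2, walk₂ h₁ h₂, ?_, rfl, rfl, ?_⟩ h
  · have := hG.ne_of_edgeMk h₁
    have := hG.ne_of_edgeMk h₂
    intro i k hi hk
    interval_cases i <;> interval_cases k <;> simp_all [walk₂, eq_comm]
  · intro i hi
    interval_cases i <;> rfl

lemma IsSigmaMAG.edgeMk_of_edgeMk_undir (hG : G.IsSigmaMAG) {a b c : V} {m : Mark}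
    (h₁ : G.EdgeMk a b m .arrow) (h₂ : G.undir b c) : G.EdgeMk a c m .arrow := by
  have hba : G.ArrowAt b a := arrowAt_of_edgeMk (edgeMk_symm h₁)
  obtain ⟨m₁, m₂, h⟩ := adj_iff_exists_edgeMk.1 (hG.sigma_complete₁ a b c hba h₂)
  have hbc : G.EdgeMk b c .tail .tail := h₂
  cases m₂
  · exact absurd hba (hG.not_arrowAt_of_tails hbc (edgeMk_symm h))
  cases m <;> cases m₁
  · exact h
  · exact absurd (arrowAt_of_edgeMk h) (hG.not_arrowAt_of_tails h₁ hbc)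
  · exact absurd (arrowAt_of_edgeMk h₁) (hG.not_arrowAt_of_tails h (edgeMk_symm hbc))
  · exact h

/-- m-openness at an inner node `v` whose incoming edge has marks `a` (far end) and `b`
(at `v`), and whose outgoing edge has marks `c` (at `v`) and `d` (far end). -/
def OpenAt (G : MixedGraph V) (Z : Set V) (v : V) (a b c d : Mark) : Prop :=
  (b = .arrow → c = .arrow → G.AncS v Z) ∧ (¬ (b = .arrow ∧ c = .arrow) → v ∉ Z) ∧
    ¬ (b = .arrow ∧ c = .tail ∧ d = .tail) ∧ ¬ (a = .tail ∧ b = .tail ∧ c = .arrow)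

lemma OpenAt.symm {v : V} {a b c d : Mark} (h : G.OpenAt Z v a b c d) : G.OpenAt Z v d c b a :=
  ⟨fun hc hb => h.1 hb hc, fun hn => h.2.1 fun hbc => hn ⟨hbc.2, hbc.1⟩,
    fun ⟨h₁, h₂, h₃⟩ => h.2.2.2 ⟨h₃, h₂, h₁⟩, fun ⟨h₁, h₂, h₃⟩ => h.2.2.1 ⟨h₃, h₂, h₁⟩⟩

lemma openAt_tail_arrow {v : V} {a b : Mark} (hv : v ∉ Z) : G.OpenAt Z v a b .tail .arrow := by
  simp [OpenAt, hv]

namespace Walk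

variable {w : G.Walk n} {j : ℕ}

lemma mOpen_iff : w.MOpen Z ↔ w.vert 0 ∉ Z ∧ w.vert n ∉ Z ∧
    ∀ k, 0 < k → k < n →
      G.OpenAt Z (w.vert k) (w.mk1 (k - 1)) (w.mk2 (k - 1)) (w.mk1 k) (w.mk2 k) := by
  constructor
  · rintro ⟨hnc, hc, hpat⟩
    exact ⟨hnc 0 (Nat.zero_le n) fun h => h.1.ne rfl, hnc n le_rfl fun h => h.2.1.ne rfl,
      fun k hk0 hkn => ⟨fun hb hc' => hc k ⟨hk0, hkn, hb, hc'⟩,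
        fun h => hnc k hkn.le fun hcol => h hcol.2.2, hpat k hk0 hkn⟩⟩
  · rintro ⟨h0, hn, hin⟩
    refine ⟨fun k hk hnc => ?_, fun k hk => (hin k hk.1 hk.2.1).1 hk.2.2.1 hk.2.2.2,
      fun k hk0 hkn => (hin k hk0 hkn).2.2⟩
    rcases Nat.eq_zero_or_pos k with rfl | hk0
    · exact h0
    rcases hk.lt_or_eq with hkn | rfl
    · exact (hin k hk0 hkn).2.1 fun h => hnc ⟨hk0, hkn, h⟩
    · exact hn

structure IsShortestMOpen (w : G.Walk n) (Z : Set V) : Prop where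
  isPath : w.IsPath
  mOpen : w.MOpen Z
  minimal : ∀ (m : ℕ) (w' : G.Walk m), w'.IsPath → w'.vert 0 = w.vert 0 →
    w'.vert m = w.vert n → w'.MOpen Z → n ≤ m

lemma IsPath.reverse (hw : w.IsPath) : w.reverse.IsPath := by
  intro a b ha hb hab
  have := hw (n - a) (n - b) (by omega) (by omega) hab
  omega

lemma MOpen.reverse (hw : w.MOpen Z) : w.reverse.MOpen Z := by
  obtain ⟨h0, hn, hin⟩ := mOpen_iff.1 hw
  refine mOpen_iff.2 ⟨by simpa [Walk.reverse] using hn, by simpa [Walk.reverse] using h0,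
    fun k hk0 hkn => ?_⟩
  have := (hin (n - k) (by omega) (by omega)).symm
  simp only [Walk.reverse]
  rwa [show n - 1 - (k - 1) = n - k by omega, show n - 1 - k = n - k - 1 by omega]

lemma IsShortestMOpen.reverse (hw : w.IsShortestMOpen Z) :
    w.reverse.IsShortestMOpen Z := by
  refine ⟨hw.isPath.reverse, hw.mOpen.reverse, fun m w' hpath h0 hm hopen => ?_⟩
  refine hw.minimal m w'.reverse hpath.reverse ?_ ?_ hopen.reverse
  · simpa [Walk.reverse] using hm
  · simpa [Walk.reverse] using h0

def shortcut (w : G.Walk n) {p q : ℕ} (hpq : p < q) (hqn : q ≤ n) (m₁ m₂ : Mark)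
    (he : G.EdgeMk (w.vert p) (w.vert q) m₁ m₂) : G.Walk (p + 1 + (n - q)) where
  vert k := w.vert (if k ≤ p then k else k + (q - p - 1))
  mk1 k := if k = p then m₁ else w.mk1 (if k < p then k else k + (q - p - 1))
  mk2 k := if k = p then m₂ else w.mk2 (if k < p then k else k + (q - p - 1))
  valid k hk := by
    rcases lt_trichotomy k p with h | rfl | h
    · simpa [h.le, h.ne, h, Nat.succ_le_of_lt h] using w.valid k (by omega)
    · simpa [show k + 1 + (q - k - 1) = q by omega] using he
    · have := w.valid (k + (q - p - 1)) (by omega)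
      simpa [h.ne', show ¬ k ≤ p by omega, show ¬ k + 1 ≤ p by omega, show ¬ k < p by omega,
        show k + 1 + (q - p - 1) = k + (q - p - 1) + 1 by omega] using this

section shortcut

variable {p q : ℕ} {hpq : p < q} {hqn : q ≤ n} {m₁ m₂ : Mark}
  {he : G.EdgeMk (w.vert p) (w.vert q) m₁ m₂}

lemma IsPath.shortcut (hw : w.IsPath) : (w.shortcut hpq hqn m₁ m₂ he).IsPath := by
  intro a b ha hb hab
  have := hw _ _ (by split_ifs <;> omega) (by split_ifs <;> omega) hab
  split_ifs at this <;> omega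

lemma MOpen.shortcut (hw : w.MOpen Z)
    (hp : 0 < p → G.OpenAt Z (w.vert p) (w.mk1 (p - 1)) (w.mk2 (p - 1)) m₁ m₂)
    (hq : q < n → G.OpenAt Z (w.vert q) m₁ m₂ (w.mk1 q) (w.mk2 q)) :
    (w.shortcut hpq hqn m₁ m₂ he).MOpen Z := by
  obtain ⟨h0, hn, hin⟩ := mOpen_iff.1 hw
  refine mOpen_iff.2 ⟨by simpa [Walk.shortcut] using h0, ?_, fun k hk0 hkn => ?_⟩
  · simpa [Walk.shortcut, show ¬ p + 1 + (n - q) ≤ p by omega,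
      show p + 1 + (n - q) + (q - p - 1) = n by omega] using hn
  simp only [Walk.shortcut]
  rcases lt_trichotomy k p with h | rfl | h
  · simpa [h.le, h.ne, h, show k - 1 < p by omega, show k - 1 ≠ p by omega]
      using hin k hk0 (by omega)
  · simpa [show k - 1 ≠ k by omega, hk0] using hp hk0
  rcases (show k = p + 1 ∨ p + 1 < k by omega) with rfl | h'
  · simpa [show p + 1 + (q - p - 1) = q by omega] using hq (by omega)
  · simpa [show ¬ k ≤ p by omega, show k ≠ p by omega, show k - 1 ≠ p by omega,
      show ¬ k < p by omega, show ¬ k - 1 < p by omega,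
      show k - 1 + (q - p - 1) = k + (q - p - 1) - 1 by omega]
      using hin (k + (q - p - 1)) (by omega) (by omega)

end shortcut

lemma IsShortestMOpen.false_of_shortcut (hw : w.IsShortestMOpen Z) {p q : ℕ}
    {m₁ m₂ : Mark} (hpq : p + 2 ≤ q) (hqn : q ≤ n) (he : G.EdgeMk (w.vert p) (w.vert q) m₁ m₂)
    (hp : 0 < p → G.OpenAt Z (w.vert p) (w.mk1 (p - 1)) (w.mk2 (p - 1)) m₁ m₂)
    (hq : q < n → G.OpenAt Z (w.vert q) m₁ m₂ (w.mk1 q) (w.mk2 q)) : False := by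
  have := hw.minimal _ (w.shortcut (by omega) hqn m₁ m₂ he) hw.isPath.shortcut
    (by simp [Walk.shortcut])
    (by simp [Walk.shortcut, show ¬ p + 1 + (n - q) ≤ p by omega]; congr 1; omega)
    (hw.mOpen.shortcut hp hq)
  omega

theorem IsShortestMOpen.false_of_chord (hG : G.IsSigmaMAG) (hw : w.IsShortestMOpen Z)
    {p q : ℕ} {m : Mark} (hpq : p + 2 ≤ q) (hqn : q ≤ n)
    (he : G.EdgeMk (w.vert p) (w.vert q) m .arrow)
    (hp : 0 < p → G.OpenAt Z (w.vert p) (w.mk1 (p - 1)) (w.mk2 (p - 1)) m .arrow)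
    (hq : q < n → w.mk1 q = .arrow → G.AncS (w.vert q) Z) : False := by
  by_cases hu : q < n ∧ w.mk1 q = .tail ∧ w.mk2 q = .tail
  · obtain ⟨hqn', h₁, h₂⟩ := hu
    have hundir : G.undir (w.vert q) (w.vert (q + 1)) := by
      simpa [h₁, h₂, EdgeMk] using w.valid q hqn'
    -- σ-completeness moves the chord to `v_p ∗→ v_{q+1}`, and the m-open path `w` cannot
    -- continue `v_q — v_{q+1}` with an arrowhead at `v_{q+1}`.
    refine hw.false_of_chord hG (q := q + 1) (by omega) hqn' (hG.edgeMk_of_edgeMk_undir he hundir)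
      hp fun hq' harr => ?_
    exact ((mOpen_iff.1 hw.mOpen).2.2 (q + 1) (by omega) hq').2.2.2 ⟨h₁, h₂, harr⟩ |>.elim
  · refine hw.false_of_shortcut hpq hqn he hp fun hqn' => ⟨fun _ => hq hqn', fun hn => ?_,
      fun ⟨_, h⟩ => hu ⟨hqn', h⟩, fun h => Mark.noConfusion h.2.1⟩
    exact hw.mOpen.1 q hqn fun hcol => hn ⟨rfl, hcol.2.2.2⟩
termination_by n - q

lemma MOpen.ancS_of_dir (hG : G.IsSigmaMAG) (hw : w.MOpen Z) (hj0 : 0 < j) (hjn : j + 1 < n)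
    (hdir : G.dir (w.vert (j - 1)) (w.vert (j + 1))) (harr : w.mk1 (j + 1) = .arrow) :
    G.AncS (w.vert (j + 1)) Z := by
  -- Either `v_{j+1}` is a collider, or ancestrality and m-openness force `v_{j+1} → v_j` with
  -- `v_j` a collider.
  cases h₂ : w.mk2 j
  case arrow => exact hw.2.1 (j + 1) ⟨by omega, hjn, h₂, harr⟩
  have hj := w.valid j (by omega)
  have hj' := w.valid (j - 1) (by omega)
  rw [Nat.sub_add_cancel hj0] at hj'
  have hpat := (mOpen_iff.1 hw).2.2 j hj0 (by omega)
  cases h₁ : w.mk1 j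
  · rw [h₁, h₂] at hj
    cases h' : w.mk2 (j - 1)
    · rw [h'] at hj'
      exact absurd (Or.inl hdir) (hG.not_arrowAt_of_tails (edgeMk_symm hj) (edgeMk_symm hj'))
    · exact absurd ⟨h', h₁, h₂⟩ hpat.2.2.1
  · rw [h₁, h₂] at hj
    cases h' : w.mk2 (j - 1)
    · cases h'' : w.mk1 (j - 1)
      · exact absurd ⟨h'', h', h₁⟩ hpat.2.2.2
      · rw [h', h''] at hj'
        exact absurd (Or.inl hj) (hG.not_arrowAt_of_tails (edgeMk_symm hj')
          (show G.EdgeMk _ _ .tail .arrow from hdir))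
    · obtain ⟨b, hb, hanc⟩ := hw.2.1 j ⟨hj0, by omega, h', h₁⟩
      exact ⟨b, hb, .head hj hanc⟩

lemma IsShortestMOpen.dir_of_adj (hG : G.IsSigmaMAG) (hw : w.IsShortestMOpen Z)
    (hj0 : 0 < j) (hjn : j < n) (hdir : G.dir (w.vert (j - 1)) (w.vert (j + 1))) {i : ℕ}
    (hij : i + 1 < j) (hcol : w.IsCollider (i + 1))
    (hd : G.dir (w.vert (i + 1)) (w.vert (j + 1))) (hadj : G.Adj (w.vert i) (w.vert (j + 1))) :
    G.dir (w.vert i) (w.vert (j + 1)) := by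
  have h₂ : w.mk2 i = .arrow := hcol.2.2.1
  have hi := w.valid i (by omega)
  rw [h₂] at hi
  have hd' : G.EdgeMk _ _ .tail .arrow := hd
  obtain ⟨m₁, m₂, he⟩ := adj_iff_exists_edgeMk.1 hadj
  cases m₂
  · exact absurd (arrowAt_of_edgeMk (edgeMk_symm hi)) (hG.not_arrowAt_of_tails hd' (edgeMk_symm he))
  cases m₁
  · exact he
  cases h₁ : w.mk1 i
  · rw [h₁] at hi
    exact absurd (arrowAt_of_edgeMk he) (hG.not_arrowAt_of_tails hi hd')
  · refine (hw.false_of_chord hG (by omega) (by omega) he (fun hi0 => ?_)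
      fun hjn' => hw.mOpen.ancS_of_dir hG hj0 hjn' hdir).elim
    have := (mOpen_iff.1 hw.mOpen).2.2 i hi0 (by omega)
    rwa [h₁, h₂] at this

lemma IsShortestMOpen.isCollider_of_dir (hG : G.IsSigmaMAG) (hw : w.IsShortestMOpen Z)
    (hj0 : 0 < j) (hjn : j < n) (hdir : G.dir (w.vert (j - 1)) (w.vert (j + 1))) {i : ℕ}
    (hij : i < j) (hd : G.dir (w.vert i) (w.vert (j + 1))) : w.IsCollider i := by
  by_contra hnc
  exact hw.false_of_chord hG (m := .tail) (by omega) (by omega) hd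
    (fun _ => openAt_tail_arrow (hw.mOpen.1 i (by omega) hnc))
    fun hjn' => hw.mOpen.ancS_of_dir hG hj0 hjn' hdir

lemma IsShortestMOpen.exists_discriminating_start (hG : G.IsSigmaMAG)
    (hw : w.IsShortestMOpen Z) (hj0 : 0 < j) (hjn : j < n)
    (hdir : G.dir (w.vert (j - 1)) (w.vert (j + 1))) :
    ∃ i < j, ¬ G.Adj (w.vert i) (w.vert (j + 1)) ∧
      ∀ l, i < l → l < j → w.IsCollider l ∧ G.dir (w.vert l) (w.vert (j + 1)) := by
  classical
  have hex : ∃ i, i < j ∧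
      ∀ l, i < l → l < j → w.IsCollider l ∧ G.dir (w.vert l) (w.vert (j + 1)) :=
    ⟨j - 1, by omega, fun l h₁ h₂ => by omega⟩
  -- `v_i` with `i = Nat.find hex` lies just left of the longest run of colliders ending at
  -- `v_{j-1}` that are parents of `v_{j+1}`; an edge between `v_i` and `v_{j+1}` would extend it.
  obtain ⟨hij, hinv⟩ := Nat.find_spec hex
  refine ⟨Nat.find hex, hij, fun hadj => ?_, hinv⟩
  set i := Nat.find hex
  have hd : G.dir (w.vert i) (w.vert (j + 1)) := by
    rcases (show i + 1 = j ∨ i + 1 < j by omega) with h | h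
    · rwa [show i = j - 1 by omega]
    · exact hw.dir_of_adj hG hj0 hjn hdir h (hinv _ (by omega) h).1 (hinv _ (by omega) h).2 hadj
  have hcol := hw.isCollider_of_dir hG hj0 hjn hdir hij hd
  refine Nat.find_min hex (show i - 1 < i by have := hcol.1; omega) ⟨by omega, fun l h₁ h₂ => ?_⟩
  rcases (show l = i ∨ i < l by omega) with rfl | h
  · exact ⟨hcol, hd⟩
  · exact hinv l h h₂

lemma isCollider_shift_iff {i m k : ℕ} (h : i + m ≤ n) (hk0 : 0 < k) (hkm : k < m) :
    (w.shift i m h).IsCollider k ↔ w.IsCollider (i + k) := by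
  simp only [IsCollider, shift]
  rw [show i + (k - 1) = i + k - 1 by omega]
  constructor <;> rintro ⟨-, -, h₁, h₂⟩ <;> exact ⟨by omega, by omega, h₁, h₂⟩

lemma IsPath.isDiscriminating_shift_iff (hw : w.IsPath) {i m : ℕ} (h : i + m ≤ n) :
    (w.shift i m h).IsDiscriminating ↔ 3 ≤ m ∧ ¬ G.Adj (w.vert i) (w.vert (i + m)) ∧
      ∀ l, i < l → l < i + m - 1 → w.IsCollider l ∧ G.dir (w.vert l) (w.vert (i + m)) := by
  have hpath : (w.shift i m h).IsPath := fun a b ha hb hab => by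
    have := hw (i + a) (i + b) (by omega) (by omega) hab
    omega
  simp only [IsDiscriminating, hpath, true_and]
  refine and_congr_right fun h3 => and_congr (by simp [shift]) ⟨fun hcol l h₁ h₂ => ?_,
    fun hcol k h₁ h₂ => ?_⟩
  · have := hcol (l - i) (by omega) (by omega)
    rw [isCollider_shift_iff h (by omega) (by omega)] at this
    simpa only [shift, show i + (l - i) = l by omega] using this
  · rw [isCollider_shift_iff h h₁ (by omega)]
    exact hcol (i + k) (by omega) (by omega)

theorem IsShortestMOpen.existsUnique_isDiscriminating_shift (hG : G.IsSigmaMAG)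
    (hw : w.IsShortestMOpen Z) (hj0 : 0 < j) (hjn : j < n)
    (hdir : G.dir (w.vert (j - 1)) (w.vert (j + 1))) :
    ∃! i, ∃ _ : i < j, (w.shift i (j + 1 - i) (by grind)).IsDiscriminating := by
  have hiff : ∀ i (hij : i < j), (w.shift i (j + 1 - i) (by grind)).IsDiscriminating ↔
      ¬ G.Adj (w.vert i) (w.vert (j + 1)) ∧
        ∀ l, i < l → l < j → w.IsCollider l ∧ G.dir (w.vert l) (w.vert (j + 1)) := by
    intro i hij
    rw [hw.isPath.isDiscriminating_shift_iff, show i + (j + 1 - i) = j + 1 by omega,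
      Nat.add_sub_cancel]
    refine ⟨fun h => h.2, fun h => ⟨?_, h⟩⟩
    by_contra h3
    exact h.1 (by rw [show i = j - 1 by omega]; exact Or.inl hdir)
  obtain ⟨i, hij, hstart⟩ := hw.exists_discriminating_start hG hj0 hjn hdir
  refine ⟨i, ⟨hij, (hiff i hij).2 hstart⟩, fun i' ⟨hij', hdisc⟩ => ?_⟩
  have hstart' := (hiff i' hij').1 hdisc
  rcases lt_trichotomy i' i with h | h | h
  · exact (hstart.1 (Or.inl (hstart'.2 i h hij).2)).elim
  · exact h
  · exact (hstart'.1 (Or.inl (hstart.2 i' h hij').2)).elim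

lemma isDiscriminating_congr {m : ℕ} {u u' : G.Walk m} (hv : ∀ k ≤ m, u.vert k = u'.vert k)
    (h₁ : ∀ k < m, u.mk1 k = u'.mk1 k) (h₂ : ∀ k < m, u.mk2 k = u'.mk2 k) :
    u.IsDiscriminating ↔ u'.IsDiscriminating := by
  suffices key : ∀ u u' : G.Walk m, (∀ k ≤ m, u.vert k = u'.vert k) →
      (∀ k < m, u.mk1 k = u'.mk1 k) → (∀ k < m, u.mk2 k = u'.mk2 k) →
      u.IsDiscriminating → u'.IsDiscriminating from
    ⟨key u u' hv h₁ h₂, key u' u (fun k hk => (hv k hk).symm) (fun k hk => (h₁ k hk).symm)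
      fun k hk => (h₂ k hk).symm⟩
  rintro u u' hv h₁ h₂ ⟨h3, hpath, hna, hcol⟩
  refine ⟨h3, fun a b ha hb hab => hpath a b ha hb (by rwa [hv a ha, hv b hb]), ?_,
    fun k hk₀ hk => ?_⟩
  · rwa [← hv 0 (Nat.zero_le m), ← hv m le_rfl]
  · obtain ⟨⟨-, -, hc₁, hc₂⟩, hd⟩ := hcol k hk₀ hk
    refine ⟨⟨hk₀, by omega, ?_, ?_⟩, ?_⟩
    · rwa [← h₂ (k - 1) (by omega)]
    · rwa [← h₁ k (by omega)]
    · rwa [← hv k (by omega), ← hv m le_rfl]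

lemma isDiscriminating_reverse_shift_iff (w : G.Walk n) {i m i' m' : ℕ} (h : i + m ≤ n)
    (h' : i' + m' ≤ n) (hi : i' = n - (i + m)) (hm : m' = m) :
    (w.shift i m h).reverse.IsDiscriminating ↔ (w.reverse.shift i' m' h').IsDiscriminating := by
  subst hi hm
  refine isDiscriminating_congr (fun k hk => ?_) (fun k hk => ?_) fun k hk => ?_
  all_goals
    simp only [shift, reverse]
    congr 1
    omega

theorem IsShortestMOpen.existsUnique_isDiscriminating_reverse_shift (hG : G.IsSigmaMAG)
    (hw : w.IsShortestMOpen Z) (hj0 : 0 < j) (hjn : j < n)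
    (hdir : G.dir (w.vert (j + 1)) (w.vert (j - 1))) :
    ∃! i, ∃ _ : j < i ∧ i ≤ n,
      ((w.shift (j - 1) (i - (j - 1)) (by grind)).reverse).IsDiscriminating := by
  have hdir' : G.dir (w.reverse.vert (n - j - 1)) (w.reverse.vert (n - j + 1)) := by
    show G.dir (w.vert (n - (n - j - 1))) (w.vert (n - (n - j + 1)))
    rwa [show n - (n - j - 1) = j + 1 by omega, show n - (n - j + 1) = j - 1 by omega]
  obtain ⟨i, ⟨hij, hdisc⟩, huniq⟩ :=
    hw.reverse.existsUnique_isDiscriminating_shift hG (j := n - j) (by omega) (by omega) hdir'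
  refine ⟨n - i, ⟨⟨by omega, by omega⟩, ?_⟩, fun i' ⟨hi', hdisc'⟩ => ?_⟩
  · exact (isDiscriminating_reverse_shift_iff w _ _ (by omega) (by omega)).2 hdisc
  · have := huniq (n - i')
      ⟨by omega, (isDiscriminating_reverse_shift_iff w _ _ (by omega) (by omega)).1 hdisc'⟩
    omega

end Walk

end MixedGraph

/-- Let `w` be a shortest m-open path given `Z` between `vert 0` and `vert n` in a
σ-MAG `H`, and let `vert j` be a covered node on `w`. Then: (1) if
`vert (j-1) → vert (j+1)`, there is a unique `i < j` such that the subpath of `w`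
between `vert i` and `vert (j+1)` is a discriminating path for `vert j`; (2) if
`vert (j-1) ← vert (j+1)`, there is a unique `i > j` such that the subpath of `w`
between `vert (j-1)` and `vert i` (traversed from `vert i`) is a discriminating path
for `vert j`. -/
theorem covered_node_unique_discriminating_subpath {V : Type*} (H : MixedGraph V)
    (hH : H.IsSigmaMAG) (Z : Set V) (n : ℕ) (w : H.Walk n) (hpath : w.IsPath)
    (hopen : w.MOpen Z)
    (hmin : ∀ (m : ℕ) (w' : H.Walk m), w'.IsPath → w'.vert 0 = w.vert 0 →
      w'.vert m = w.vert n → w'.MOpen Z → n ≤ m)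
    (j : ℕ) (hj0 : 0 < j) (hjn : j < n) :
    (H.dir (w.vert (j - 1)) (w.vert (j + 1)) →
      ∃! i, ∃ _ : i < j, (w.shift i (j + 1 - i) (by omega)).IsDiscriminating) ∧
    (H.dir (w.vert (j + 1)) (w.vert (j - 1)) →
      ∃! i, ∃ _ : j < i ∧ i ≤ n,
        ((w.shift (j - 1) (i - (j - 1)) (by omega)).reverse).IsDiscriminating) := by
  have hw : w.IsShortestMOpen Z := ⟨hpath, hopen, hmin⟩
  exact ⟨hw.existsUnique_isDiscriminating_shift hH hj0 hjn,
    hw.existsUnique_isDiscriminating_reverse_shift hH hj0 hjn⟩
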